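/- Identifiability of the causal direction (sufficiency part of the cause/mechanism-variability theorem): Suppose the quadruple (X¹, Y¹, X², Y²) admits a cause-variability X→Y representation or a mechanism-variability X→Y representation, and suppose X¹ is NOT conditionally independent of Y² given Y¹. Then the joint law of (X¹, Y¹, X², Y²) admits no Y→X representation; in particular, the causal direction X→Y is uniquely determined. -/

import Mathlib

open MeasureTheory ProbabilityTheory

/-- `A` is conditionally independent of `B` given `C`: conditional independence of the
σ-algebras generated by `A` and `B` given the σ-algebra generated by `C`. -/
def CondIndepRV {Ω β γ δ : Type*} [MeasurableSpace Ω] [StandardBorelSpace Ω]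
    [MeasurableSpace β] [MeasurableSpace γ] [MeasurableSpace δ]
    (P : Measure Ω) [IsFiniteMeasure P]
    (A : Ω → β) (B : Ω → γ) (C : Ω → δ) (hC : Measurable C) : Prop :=
  ProbabilityTheory.CondIndepFun (MeasurableSpace.comap C inferInstance) hC.comap_le A B P

/-- Joint law on `E × F` of a pair whose first component has law `m` and whose conditional
law of the second component given that the first equals `x` is `b x`. -/
noncomputable def jointXY {E F : Type*} [MeasurableSpace E] [MeasurableSpace F]
    (m : Measure E) (b : E → Measure F) : Measure (E × F) :=
  m.bind fun x => (b x).map fun y => (x, y)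

/-- Joint law on `E × F` of a pair whose *second* component has law `m` and whose conditional
law of the first component given that the second equals `y` is `a y`. -/
noncomputable def jointYX {E F : Type*} [MeasurableSpace E] [MeasurableSpace F]
    (m : Measure F) (a : F → Measure E) : Measure (E × F) :=
  m.bind fun y => (a y).map fun x => (x, y)

/-- Law of the quadruple `((X¹,Y¹),(X²,Y²))`. -/
noncomputable def quadLaw {Ω E F : Type*} [MeasurableSpace Ω] [MeasurableSpace E]
    [MeasurableSpace F] (P : Measure Ω)
    (X1 : Ω → E) (Y1 : Ω → F) (X2 : Ω → E) (Y2 : Ω → F) :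
    Measure ((E × F) × (E × F)) :=
  P.map fun ω => ((X1 ω, Y1 ω), (X2 ω, Y2 ω))

/-- Cause-variability `X → Y` representation: a mixture over `θ ~ μ` of laws under which
`(X¹,Y¹)` and `(X²,Y²)` are i.i.d. with `Xⁱ ~ α θ` and `Yⁱ | Xⁱ = x ~ β x`. -/
def HasCauseVarRep {Ω E F : Type*} [MeasurableSpace Ω] [MeasurableSpace E] [MeasurableSpace F]
    (P : Measure Ω) (X1 : Ω → E) (Y1 : Ω → F) (X2 : Ω → E) (Y2 : Ω → F) : Prop :=
  ∃ (T : Type) (_ : MeasurableSpace T) (μ : Measure T) (_ : IsProbabilityMeasure μ)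
    (α : Kernel T E) (_ : IsMarkovKernel α) (β : Kernel E F) (_ : IsMarkovKernel β),
    quadLaw P X1 Y1 X2 Y2 =
      μ.bind fun θ => (jointXY (α θ) fun x => β x).prod (jointXY (α θ) fun x => β x)

/-- Mechanism-variability `X → Y` representation: a mixture over `ψ ~ ν` of laws under which
`(X¹,Y¹)` and `(X²,Y²)` are i.i.d. with `Xⁱ ~ π` and `Yⁱ | Xⁱ = x ~ β (ψ, x)`. -/
def HasMechVarRep {Ω E F : Type*} [MeasurableSpace Ω] [MeasurableSpace E] [MeasurableSpace F]
    (P : Measure Ω) (X1 : Ω → E) (Y1 : Ω → F) (X2 : Ω → E) (Y2 : Ω → F) : Prop :=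
  ∃ (Ψ : Type) (_ : MeasurableSpace Ψ) (ν : Measure Ψ) (_ : IsProbabilityMeasure ν)
    (π : Measure E) (_ : IsProbabilityMeasure π)
    (β : Kernel (Ψ × E) F) (_ : IsMarkovKernel β),
    quadLaw P X1 Y1 X2 Y2 =
      ν.bind fun ψ =>
        (jointXY π fun x => β (ψ, x)).prod (jointXY π fun x => β (ψ, x))

/-- Reverse-direction `Y → X` representation: a mixture over `(θ, ψ) ~ μ ⊗ ν` of laws under
which `(Y¹,X¹)` and `(Y²,X²)` are i.i.d. with `Yⁱ ~ β ψ` and `Xⁱ | Yⁱ = y ~ α (θ, y)`. -/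
def HasRevRep {Ω E F : Type*} [MeasurableSpace Ω] [MeasurableSpace E] [MeasurableSpace F]
    (P : Measure Ω) (X1 : Ω → E) (Y1 : Ω → F) (X2 : Ω → E) (Y2 : Ω → F) : Prop :=
  ∃ (T : Type) (_ : MeasurableSpace T) (Ψ : Type) (_ : MeasurableSpace Ψ)
    (μ : Measure T) (_ : IsProbabilityMeasure μ) (ν : Measure Ψ) (_ : IsProbabilityMeasure ν)
    (β : Kernel Ψ F) (_ : IsMarkovKernel β) (α : Kernel (T × F) E) (_ : IsMarkovKernel α),
    quadLaw P X1 Y1 X2 Y2 =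
      (μ.prod ν).bind fun p =>
        (jointYX (β p.2) fun y => α (p.1, y)).prod (jointYX (β p.2) fun y => α (p.1, y))

/-!
In a `Y → X` representation the parameter `θ` of the mechanism `Y → X` is independent of the
parameter `ψ` of the law of `Y`, and the pair `(Y¹, Y²)` only depends on `ψ`. Observing
`(Y¹, Y²)` therefore carries no information about `θ`, so the conditional law of `X¹` given
`(Y¹, Y²)` is the `μ`-average `∫ α (θ, Y¹) dμ(θ)`, a function of `Y¹` alone. This is exactly
`X¹ ⟂ Y² | Y¹`, which the hypothesis rules out.
-/

open scoped ENNReal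

section CondIndepCriterion

variable {E F G : Type*} [MeasurableSpace E] [MeasurableSpace F] [MeasurableSpace G]

lemma MeasureTheory.Measure.map_compProd_prodMkRight (ρ : Measure (F × G)) [IsFiniteMeasure ρ]
    (κ : Kernel F E) [IsFiniteKernel κ] :
    (ρ ⊗ₘ κ.prodMkRight G).map (fun p => (p.1.1, p.2)) = ρ.fst ⊗ₘ κ := by
  refine Measure.ext_prod fun {B s} hB hs => ?_
  rw [Measure.map_apply (by fun_prop) (hB.prod hs), Measure.compProd_apply_prod hB hs, Measure.fst,
    setLIntegral_map hB (κ.measurable_coe hs) measurable_fst,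
    show (fun p : (F × G) × E => (p.1.1, p.2)) ⁻¹' B ×ˢ s = (Prod.fst ⁻¹' B) ×ˢ s from rfl,
    Measure.compProd_apply_prod (measurable_fst hB) hs]
  rfl

variable [StandardBorelSpace E] [Nonempty E] [StandardBorelSpace G] [Nonempty G]
  {Ω : Type*} [MeasurableSpace Ω] [StandardBorelSpace Ω] {P : Measure Ω} [IsFiniteMeasure P]
  {f : Ω → E} {g : Ω → G} {k : Ω → F}

/-- The hypothesis says that `κ ∘ k` is a version of the conditional law of `f` given `(k, g)`. -/
theorem condIndepFun_of_map_eq_compProd_prodMkRight (hf : Measurable f) (hg : Measurable g)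
    (hk : Measurable k) {ρ : Measure (F × G)} [IsFiniteMeasure ρ] (κ : Kernel F E)
    [IsMarkovKernel κ] (h : P.map (fun ω => ((k ω, g ω), f ω)) = ρ ⊗ₘ κ.prodMkRight G) :
    f ⟂ᵢ[k, hk; P] g := by
  have hρ : P.map (fun ω => (k ω, g ω)) = ρ := by
    rw [← Measure.fst_compProd ρ (κ.prodMkRight G), ← h, Measure.fst_map_prodMk hf]
  subst hρ
  have hkf : P.map (fun ω => (k ω, f ω)) = P.map k ⊗ₘ κ := by
    rw [← Measure.fst_map_prodMk (X := k) hg, ← Measure.map_compProd_prodMkRight, ← h,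
      Measure.map_map (by fun_prop) (by fun_prop)]
    rfl
  refine ((condIndepFun_iff_condDistrib_prod_ae_eq_prodMkRight hf hg hk).2 ?_).symm
  have hfkg := condDistrib_ae_eq_of_measure_eq_compProd _ hf.aemeasurable h
  have hfk := ae_of_ae_map (μ := P.map fun ω => (k ω, g ω)) measurable_fst.aemeasurable
    (by rw [Measure.map_map measurable_fst (by fun_prop)]
        exact condDistrib_ae_eq_of_measure_eq_compProd k hf.aemeasurable hkf)
  filter_upwards [hfkg, hfk] with x hx1 hx2
  rw [hx1, Kernel.prodMkRight_apply, Kernel.prodMkRight_apply, hx2]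

end CondIndepCriterion

section ReverseModel

variable {E F T Ψ : Type*} [MeasurableSpace E] [MeasurableSpace F] [MeasurableSpace T]
  [MeasurableSpace Ψ]

lemma jointYX_eq_map_swap_compProd (m : Measure F) [SFinite m] (κ : Kernel F E)
    [IsSFiniteKernel κ] : jointYX m κ = (m ⊗ₘ κ).map Prod.swap := by
  rw [Measure.compProd_eq_comp_prod, Measure.map_comp _ _ measurable_swap, jointYX]
  congr
  funext y
  rw [Kernel.map_apply _ measurable_swap, Kernel.prod_apply, Kernel.id_apply, Measure.dirac_prod,
    Measure.map_map measurable_swap measurable_prodMk_left]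
  rfl

variable (α : Kernel (T × F) E) (β : Kernel Ψ F)

/-- `jointYX (β ψ) (α (θ, ·))` as a kernel in `(θ, ψ)`, which provides the measurability in the
parameters needed to integrate against `μ.prod ν`. -/
noncomputable def revJoint : Kernel (T × Ψ) (E × F) :=
  (Kernel.prodMkLeft T β ⊗ₖ α.comap (fun q => (q.1.1, q.2)) (by fun_prop)).map Prod.swap

instance [IsMarkovKernel α] [IsMarkovKernel β] : IsMarkovKernel (revJoint α β) :=
  Kernel.IsMarkovKernel.map _ measurable_swap

lemma revJoint_apply [IsSFiniteKernel α] [IsSFiniteKernel β] (p : T × Ψ) :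
    revJoint α β p = jointYX (β p.2) (fun y => α (p.1, y)) := by
  rw [revJoint, Kernel.map_apply _ measurable_swap, Kernel.compProd_apply_eq_compProd_sectR,
    show (fun y => α (p.1, y)) = ⇑(Kernel.sectR α p.1) from rfl, jointYX_eq_map_swap_compProd]
  rfl

lemma revJoint_apply_prod [IsSFiniteKernel α] [IsSFiniteKernel β] (p : T × Ψ) {s : Set E}
    {B : Set F} (hs : MeasurableSet s) (hB : MeasurableSet B) :
    revJoint α β p (s ×ˢ B) = ∫⁻ y in B, α (p.1, y) s ∂β p.2 := by
  rw [revJoint, Kernel.map_apply' _ measurable_swap _ (hs.prod hB), Set.preimage_swap_prod,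
    Kernel.compProd_apply_prod hB hs]
  rfl

noncomputable def avgKernel (μ : Measure T) : Kernel F E :=
  α ∘ₖ (Kernel.const F μ ×ₖ Kernel.id)

instance (μ : Measure T) [IsProbabilityMeasure μ] [IsMarkovKernel α] :
    IsMarkovKernel (avgKernel α μ) := by
  unfold avgKernel
  infer_instance

lemma avgKernel_apply' (μ : Measure T) [SFinite μ] (y : F) {s : Set E} (hs : MeasurableSet s) :
    avgKernel α μ y s = ∫⁻ θ, α (θ, y) s ∂μ := by
  rw [avgKernel, Kernel.comp_apply' _ _ _ hs, Kernel.prod_apply, Kernel.const_apply,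
    Kernel.id_apply, lintegral_prod _ (α.measurable_coe hs).aemeasurable]
  exact lintegral_congr fun θ =>
    lintegral_dirac' _ ((α.measurable_coe hs).comp measurable_prodMk_left)

lemma revMixture_apply_prod (μ : Measure T) [IsProbabilityMeasure μ] (ν : Measure Ψ)
    [IsProbabilityMeasure ν] [IsMarkovKernel α] [IsMarkovKernel β]
    {s : Set E} {B t : Set F} (hs : MeasurableSet s) (hB : MeasurableSet B)
    (ht : MeasurableSet t) :
    ((μ.prod ν).bind fun p =>
        (jointYX (β p.2) fun y => α (p.1, y)).prod (jointYX (β p.2) fun y => α (p.1, y)))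
        ((s ×ˢ B) ×ˢ (Set.univ ×ˢ t))
      = ∫⁻ ψ, (∫⁻ y in B, avgKernel α μ y s ∂β ψ) * β ψ t ∂ν := by
  simp_rw [← revJoint_apply, ← Kernel.prod_apply]
  have hmeas : Measurable fun p => revJoint α β p (s ×ˢ B) * revJoint α β p (Set.univ ×ˢ t) :=
    (Kernel.measurable_coe _ (hs.prod hB)).mul
      (Kernel.measurable_coe _ (MeasurableSet.univ.prod ht))
  rw [Measure.bind_apply ((hs.prod hB).prod (MeasurableSet.univ.prod ht)) (Kernel.aemeasurable _)]
  simp_rw [Kernel.prod_apply, Measure.prod_prod]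
  rw [lintegral_prod_symm _ hmeas.aemeasurable]
  refine lintegral_congr fun ψ => ?_
  simp_rw [revJoint_apply_prod _ _ _ hs hB, revJoint_apply_prod _ _ _ MeasurableSet.univ ht,
    measure_univ, setLIntegral_one]
  rw [lintegral_mul_const' _ _ (measure_ne_top _ _),
    lintegral_lintegral_swap (α.measurable_coe hs).aemeasurable]
  simp_rw [avgKernel_apply' _ _ _ hs]

lemma iidMixture_compProd_apply_prod (ν : Measure Ψ) [IsFiniteMeasure ν] [IsMarkovKernel β]
    (κ : Kernel F E) [IsFiniteKernel κ] {s : Set E} {B t : Set F} (hs : MeasurableSet s)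
    (hB : MeasurableSet B) (ht : MeasurableSet t) :
    (((β ×ₖ β) ∘ₘ ν) ⊗ₘ κ.prodMkRight F) ((B ×ˢ t) ×ˢ s)
      = ∫⁻ ψ, (∫⁻ y in B, κ y s ∂β ψ) * β ψ t ∂ν := by
  rw [Measure.compProd_apply_prod (hB.prod ht) hs, ← lintegral_indicator (hB.prod ht),
    Measure.lintegral_bind (Kernel.aemeasurable _)
      (((κ.prodMkRight F).measurable_coe hs).indicator (hB.prod ht)).aemeasurable]
  refine lintegral_congr fun ψ => ?_
  rw [lintegral_indicator (hB.prod ht), Kernel.prod_apply, ← Measure.prod_restrict,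
    lintegral_prod _ ((κ.prodMkRight F).measurable_coe hs).aemeasurable]
  simp_rw [Kernel.prodMkRight_apply, lintegral_const, Measure.restrict_apply_univ]
  rw [lintegral_mul_const' _ _ (measure_ne_top _ _)]

end ReverseModel

theorem condIndepRV_of_hasRevRep {Ω E F : Type*} [MeasurableSpace Ω] [StandardBorelSpace Ω]
    [MeasurableSpace E] [StandardBorelSpace E] [MeasurableSpace F] [StandardBorelSpace F]
    {P : Measure Ω} [IsProbabilityMeasure P] {X1 X2 : Ω → E} {Y1 Y2 : Ω → F}
    (hX1 : Measurable X1) (hY1 : Measurable Y1) (hX2 : Measurable X2) (hY2 : Measurable Y2)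
    (h : HasRevRep P X1 Y1 X2 Y2) :
    CondIndepRV P X1 Y2 Y1 hY1 := by
  obtain ⟨T, _, Ψ, _, μ, _, ν, _, β, _, α, _, hlaw⟩ := h
  obtain ⟨ω₀⟩ := nonempty_of_isProbabilityMeasure P
  have : Nonempty E := ⟨X1 ω₀⟩
  have : Nonempty F := ⟨Y1 ω₀⟩
  refine condIndepFun_of_map_eq_compProd_prodMkRight hX1 hY2 hY1 (ρ := (β ×ₖ β) ∘ₘ ν)
    (avgKernel α μ) (Measure.ext_prod₃' fun {B t s} hB ht hs => ?_)
  rw [iidMixture_compProd_apply_prod _ _ _ hs hB ht, ← revMixture_apply_prod α β μ ν hs hB ht,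
    ← hlaw, quadLaw, Measure.map_apply (by fun_prop) ((hB.prod ht).prod hs),
    Measure.map_apply (by fun_prop) ((hs.prod hB).prod (MeasurableSet.univ.prod ht))]
  congr 1
  ext ω
  simp only [Set.mem_preimage, Set.mem_prod, Set.mem_univ, true_and]
  tauto

theorem no_revRep_of_varRep_general {Ω E F : Type*} [MeasurableSpace Ω] [StandardBorelSpace Ω]
    [MeasurableSpace E] [StandardBorelSpace E] [MeasurableSpace F] [StandardBorelSpace F]
    (P : Measure Ω) [IsProbabilityMeasure P]
    (X1 X2 : Ω → E) (Y1 Y2 : Ω → F)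
    (hX1 : Measurable X1) (hY1 : Measurable Y1) (hX2 : Measurable X2) (hY2 : Measurable Y2)
    (hdep : ¬ CondIndepRV P X1 Y2 Y1 hY1) :
    ¬ HasRevRep P X1 Y1 X2 Y2 :=
  fun hrev => hdep (condIndepRV_of_hasRevRep hX1 hY1 hX2 hY2 hrev)

/-- **Identifiability of the causal direction** (sufficiency part of the
cause/mechanism-variability theorem). If the quadruple `(X¹, Y¹, X², Y²)` admits a
cause-variability or a mechanism-variability `X → Y` representation, and `X¹` is *not*
conditionally independent of `Y²` given `Y¹`, then the joint law admits no `Y → X`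
representation: the causal direction `X → Y` is uniquely determined. -/
theorem no_revRep_of_varRep {Ω E F : Type*} [MeasurableSpace Ω] [StandardBorelSpace Ω]
    [MeasurableSpace E] [StandardBorelSpace E] [MeasurableSpace F] [StandardBorelSpace F]
    (P : Measure Ω) [IsProbabilityMeasure P]
    (X1 X2 : Ω → E) (Y1 Y2 : Ω → F)
    (hX1 : Measurable X1) (hY1 : Measurable Y1) (hX2 : Measurable X2) (hY2 : Measurable Y2)
    (hrep : HasCauseVarRep P X1 Y1 X2 Y2 ∨ HasMechVarRep P X1 Y1 X2 Y2)
    (hdep : ¬ CondIndepRV P X1 Y2 Y1 hY1) :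
    ¬ HasRevRep P X1 Y1 X2 Y2 :=
  no_revRep_of_varRep_general P X1 X2 Y1 Y2 hX1 hY1 hX2 hY2 hdep
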